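/- Fix t ∈ Ω. Under conditions C1–C6, the expectation of the second proposed cumulative survival function estimator, E[𝕊̃_{X,2}(t)] = E[∫_{−∞}^{g⁻¹(X)} g′(z) V((g⁻¹(t) − z)/h) dz], satisfies, as h → 0⁺: E[𝕊̃_{X,2}(t)] − 𝕊_X(t) = (h²/2) b₃(t) ∫_{−∞}^{∞} y² K(y) dy + o(h²), where b₃(t) = (g′(g⁻¹(t)))² f_X(t) − g″(g⁻¹(t)) S_X(t). -/

import Mathlib

open MeasureTheory Filter Asymptotics

/-- `V x = ∫_x^∞ K(z) dz`. -/
noncomputable def kerV (K : ℝ → ℝ) (x : ℝ) : ℝ := ∫ z in Set.Ioi x, K z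

/-- `W x = ∫_{-∞}^x K(z) dz`. -/
noncomputable def kerW (K : ℝ → ℝ) (x : ℝ) : ℝ := ∫ z in Set.Iic x, K z

/-- The survival function of `X`: `S_X(t) = P(X > t)`. -/
noncomputable def survival {α : Type*} [MeasurableSpace α] (μ : Measure α)
    (X : α → ℝ) (t : ℝ) : ℝ := (μ {ω | t < X ω}).toReal

/-- The cumulative survival function of `X`: `𝕊_X(t) = ∫_t^∞ S_X(x) dx`. -/
noncomputable def cumSurvival {α : Type*} [MeasurableSpace α] (μ : Measure α)
    (X : α → ℝ) (t : ℝ) : ℝ := ∫ x in Set.Ioi t, survival μ X x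

/-- `𝕊̄_X(t) = ∫_t^∞ 𝕊_X(x) dx`. -/
noncomputable def cumCumSurvival {α : Type*} [MeasurableSpace α] (μ : Measure α)
    (X : α → ℝ) (t : ℝ) : ℝ := ∫ x in Set.Ioi t, cumSurvival μ X x

/-! Put `τ = g⁻¹ t` and `a y = ∫_y^∞ g′ S_Y`. Since `V x + V (-x) = 1`, condition C5 at `±u`
makes `g′` integrable, so `g` is bounded and two applications of Fubini turn the mean of the
estimator into the kernel smoothing `∫ K(u) a(τ - h u) du`; the change of variables `x = g z`
identifies `a = 𝕊_X ∘ g`. In the second-order expansion of `a` at `τ` the linear term integrates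
to zero by symmetry of `K`, and the Taylor remainder, bounded by `2C (y - τ)²` (from `|a''| ≤ C`)
and `o((y - τ)²)` at `τ`, contributes `o(h²)` by dominated convergence. Finally the product rule
gives `a''(τ) = g′(τ)² f_X(t) - g″(τ) S_X(t)`. -/

open Set Topology

section Kernel

variable {K : ℝ → ℝ}

lemma kerV_neg (hK : ∀ x, K (-x) = K x) (x : ℝ) : kerV K (-x) = kerW K x := by
  have h := integral_comp_neg_Ioi (-x) K
  simp only [hK, neg_neg] at h
  exact h

lemma kerV_add_kerW (hK : Integrable K) (x : ℝ) : kerV K x + kerW K x = ∫ y, K y := by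
  rw [kerV, kerW, ← compl_Ioi, integral_add_compl measurableSet_Ioi hK]

lemma integrable_of_integrable_comp_mul_mul_kerV {f : ℝ → ℝ} (hK : ∀ x, K (-x) = K x)
    (hK_one : ∫ x, K x = 1) {u : ℝ} (hu : u ≠ 0)
    (hpos : Integrable fun x => f (u * x) * kerV K x)
    (hneg : Integrable fun x => f (-u * x) * kerV K x) : Integrable f := by
  have hW : Integrable fun x => f (u * x) * kerW K x := by
    simpa only [neg_mul_neg, kerV_neg hK] using hneg.comp_neg
  have hsum : Integrable fun x => f (u • x) := by
    refine (hpos.add hW).congr (Eventually.of_forall fun x => ?_)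
    simp only [Pi.add_apply, ← mul_add, kerV_add_kerW (integrable_of_integral_eq_one hK_one),
      hK_one, mul_one, smul_eq_mul]
  exact (integrable_comp_smul_iff volume f hu).mp hsum

lemma integrable_mul_of_integrable_sq_mul (hK : Integrable K)
    (hK2 : Integrable fun x => x ^ 2 * K x) : Integrable fun x => x * K x := by
  refine (hK.norm.add hK2.norm).mono'
    (continuous_id.aestronglyMeasurable.mul hK.aestronglyMeasurable)
    (Eventually.of_forall fun x => ?_)
  have h : |x| ≤ 1 + x ^ 2 := by nlinarith [sq_nonneg (|x| - 1), sq_abs x]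
  simp only [Real.norm_eq_abs, abs_mul, abs_pow, sq_abs, Pi.add_apply]
  nlinarith [mul_le_mul_of_nonneg_right h (abs_nonneg (K x))]

lemma integral_mul_eq_zero_of_even (hK : ∀ x, K (-x) = K x) : ∫ x, x * K x = 0 := by
  have h := integral_neg_eq_self (fun x : ℝ => x * K x) volume
  simp only [hK, neg_mul, integral_neg] at h
  linarith

end Kernel

section Smoothing

variable {f : ℝ → ℝ}

lemma taylorWithinEval_two_univ (τ y : ℝ) :
    taylorWithinEval f 2 univ τ y =
      f τ + deriv f τ * (y - τ) + deriv (deriv f) τ / 2 * (y - τ) ^ 2 := by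
  simp only [taylorWithinEval_succ, taylor_within_apply, Finset.range_one, Finset.sum_singleton,
    iteratedDerivWithin_univ, iteratedDeriv_zero, iteratedDeriv_succ, smul_eq_mul,
    Nat.factorial, Nat.cast_one, Nat.reduceAdd]
  ring

lemma abs_sub_taylorWithinEval_two_le (hf : ContDiff ℝ 2 f) {C : ℝ}
    (hC : ∀ y, |deriv (deriv f) y| ≤ C) (τ y : ℝ) :
    |f y - taylorWithinEval f 2 univ τ y| ≤ 2 * C * (y - τ) ^ 2 := by
  have hf' : Differentiable ℝ (deriv f) := (hf.iterate_deriv' 1 1).differentiable one_ne_zero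
  have hlip : ∀ x, |deriv f x - deriv f τ| ≤ C * |x - τ| := fun x =>
    convex_univ.norm_image_sub_le_of_norm_deriv_le (fun x _ => hf' x) (fun x _ => hC x)
      (mem_univ τ) (mem_univ x)
  have hR : ∀ x, HasDerivAt (fun x => f x - taylorWithinEval f 2 univ τ x)
      (deriv f x - deriv f τ - deriv (deriv f) τ * (x - τ)) x := by
    intro x
    simp only [taylorWithinEval_two_univ]
    have := ((hf.differentiable (by norm_num) x).hasDerivAt).sub
      (((((hasDerivAt_id x).sub_const τ).const_mul (deriv f τ)).const_add (f τ)).add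
        ((((hasDerivAt_id x).sub_const τ).pow 2).const_mul (deriv (deriv f) τ / 2)))
    exact this.congr_deriv (by simp only [id]; ring)
  have hbound : ∀ x ∈ uIcc τ y,
      ‖deriv f x - deriv f τ - deriv (deriv f) τ * (x - τ)‖ ≤ 2 * C * |y - τ| := by
    intro x hx
    have hxy : |x - τ| ≤ |y - τ| := abs_sub_left_of_mem_uIcc hx
    have hC0 : 0 ≤ C := (abs_nonneg _).trans (hC τ)
    rw [Real.norm_eq_abs]
    calc |deriv f x - deriv f τ - deriv (deriv f) τ * (x - τ)|
        ≤ |deriv f x - deriv f τ| + |deriv (deriv f) τ| * |x - τ| := by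
          rw [← abs_mul]; exact abs_sub _ _
      _ ≤ C * |x - τ| + C * |x - τ| := by gcongr; exacts [hlip x, hC τ]
      _ ≤ 2 * C * |y - τ| := by nlinarith
  have := convex_uIcc τ y |>.norm_image_sub_le_of_norm_hasDerivWithin_le
    (fun x _ => (hR x).hasDerivWithinAt) hbound left_mem_uIcc right_mem_uIcc
  have hRτ : f τ - taylorWithinEval f 2 univ τ τ = 0 := by simp
  rw [hRτ, sub_zero, Real.norm_eq_abs, Real.norm_eq_abs] at this
  calc _ ≤ 2 * C * |y - τ| * |y - τ| := this
    _ = 2 * C * (y - τ) ^ 2 := by rw [mul_assoc, ← sq, sq_abs]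

variable {K : ℝ → ℝ}

lemma integrable_mul_comp_of_abs_le_sq {R : ℝ → ℝ} {D τ : ℝ} (hK : AEStronglyMeasurable K)
    (hK2 : Integrable fun u => u ^ 2 * K u) (hR : Continuous R)
    (hRD : ∀ y, |R y| ≤ D * (y - τ) ^ 2) (h : ℝ) :
    Integrable fun u => K u * R (τ - h * u) := by
  refine (hK2.norm.const_mul (D * h ^ 2)).mono' (hK.mul (by fun_prop : Continuous
    fun u => R (τ - h * u)).aestronglyMeasurable) (Eventually.of_forall fun u => ?_)
  have hu := hRD (τ - h * u)
  rw [show τ - h * u - τ = -(h * u) by ring] at hu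
  simp only [Real.norm_eq_abs, abs_mul, abs_pow, sq_abs]
  nlinarith [abs_nonneg (K u)]

lemma isLittleO_integral_mul_comp_of_isLittleO_sq {R : ℝ → ℝ} {D τ : ℝ} (hK : Integrable K)
    (hK2 : Integrable fun u => u ^ 2 * K u) (hR : Continuous R)
    (hRD : ∀ y, |R y| ≤ D * (y - τ) ^ 2) (hRo : R =o[𝓝 τ] fun y => (y - τ) ^ 2) :
    (fun h => ∫ u, K u * R (τ - h * u)) =o[𝓝 0] fun h => h ^ 2 := by
  have hRτ : R τ = 0 := by simpa using hRD τ
  have hD : 0 ≤ D := by simpa using (abs_nonneg _).trans (hRD (τ + 1))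
  have hbound : ∀ h u, ‖K u * R (τ - h * u) / h ^ 2‖ ≤ D * ‖u ^ 2 * K u‖ := by
    intro h u
    rcases eq_or_ne h 0 with rfl | hh
    · simp only [ne_eq, OfNat.ofNat_ne_zero, not_false_eq_true, zero_pow, div_zero, norm_zero]
      positivity
    have hu := hRD (τ - h * u)
    rw [show τ - h * u - τ = -(h * u) by ring] at hu
    simp only [norm_div, norm_mul, Real.norm_eq_abs, abs_pow, sq_abs]
    rw [div_le_iff₀ (by positivity)]
    nlinarith [abs_nonneg (K u)]
  have hlim : ∀ u, Tendsto (fun h => K u * R (τ - h * u) / h ^ 2) (𝓝 0) (𝓝 0) := by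
    intro u
    have hk : Tendsto (fun h : ℝ => τ - h * u) (𝓝 0) (𝓝 τ) :=
      (by fun_prop : Continuous fun h : ℝ => τ - h * u).tendsto' 0 τ (by simp)
    have hsq : (fun h : ℝ => (τ - h * u - τ) ^ 2) =O[𝓝 0] fun h => h ^ 2 :=
      .of_bound (u ^ 2) (Eventually.of_forall fun h => by
        simp only [Real.norm_eq_abs, abs_pow, sq_abs]; nlinarith)
    simpa [mul_div_assoc] using
      ((hRo.comp_tendsto hk).trans_isBigO hsq).tendsto_div_nhds_zero.const_mul (K u)
  rw [isLittleO_iff_tendsto' (Eventually.of_forall fun h hh => by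
    simp [pow_eq_zero_iff two_ne_zero |>.mp hh, hRτ])]
  simp_rw [← integral_div]
  simpa using tendsto_integral_filter_of_dominated_convergence _
    (Eventually.of_forall fun h =>
      ((integrable_mul_comp_of_abs_le_sq hK.1 hK2 hR hRD h).div_const _).1)
    (Eventually.of_forall fun h => Eventually.of_forall (hbound h)) (hK2.norm.const_mul D)
    (Eventually.of_forall hlim)

theorem isLittleO_integral_mul_comp_sub_taylor {C : ℝ} (hK : Integrable K)
    (hK_symm : ∀ x, K (-x) = K x) (hK2 : Integrable fun u => u ^ 2 * K u)
    (hf : ContDiff ℝ 2 f) (hC : ∀ y, |deriv (deriv f) y| ≤ C) (τ : ℝ) :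
    (fun h => (∫ u, K u * f (τ - h * u)) - (∫ u, K u) * f τ
        - h ^ 2 / 2 * deriv (deriv f) τ * ∫ u, u ^ 2 * K u) =o[𝓝 0] fun h => h ^ 2 := by
  set R := fun y => f y - taylorWithinEval f 2 univ τ y
  have hR : Continuous R := by
    simp only [R, taylorWithinEval_two_univ]
    exact hf.continuous.sub (by fun_prop)
  have hK1 := integrable_mul_of_integrable_sq_mul hK hK2
  refine (isLittleO_integral_mul_comp_of_isLittleO_sq hK hK2 hR
    (abs_sub_taylorWithinEval_two_le hf hC τ) (taylor_isLittleO_univ hf)).congr_left fun h => ?_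
  have hsplit : (fun u => K u * f (τ - h * u)) = fun u => K u * R (τ - h * u)
      + (f τ * K u + -(h * deriv f τ) * (u * K u)
        + h ^ 2 / 2 * deriv (deriv f) τ * (u ^ 2 * K u)) := by
    ext u
    simp only [R, taylorWithinEval_two_univ]
    ring
  have IR := integrable_mul_comp_of_abs_le_sq hK.1 hK2 hR
    (abs_sub_taylorWithinEval_two_le hf hC τ) h
  have I0 : Integrable fun u => f τ * K u := hK.const_mul _
  have I1 : Integrable fun u => -(h * deriv f τ) * (u * K u) := hK1.const_mul _
  have I2 : Integrable fun u => h ^ 2 / 2 * deriv (deriv f) τ * (u ^ 2 * K u) :=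
    hK2.const_mul _
  rw [hsplit, integral_add IR ((I0.fun_add I1).fun_add I2), integral_add (I0.fun_add I1) I2,
    integral_add I0 I1, integral_const_mul, integral_const_mul, integral_const_mul,
    integral_mul_eq_zero_of_even hK_symm]
  ring

end Smoothing

section Survival

variable {α : Type*} [MeasurableSpace α] {μ : Measure α} {X : α → ℝ}

lemma survival_nonneg (x : ℝ) : 0 ≤ survival μ X x := ENNReal.toReal_nonneg

lemma survival_le_one [IsProbabilityMeasure μ] (x : ℝ) : survival μ X x ≤ 1 :=
  measureReal_le_one

lemma integral_max_sub_zero_eq_cumSurvival [IsFiniteMeasure μ] (hX : Integrable X μ) (s : ℝ) :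
    ∫ ω, max (X ω - s) 0 ∂μ = cumSurvival μ X s := by
  have hlevel : ∀ r ∈ Ioi (0 : ℝ), μ.real {ω | r < max (X ω - s) 0} = survival μ X (s + r) := by
    intro r (hr : 0 < r)
    have hset : {ω | r < max (X ω - s) 0} = {ω | s + r < X ω} := by
      ext ω
      change r < max (X ω - s) 0 ↔ s + r < X ω
      rw [lt_max_iff, or_iff_left hr.not_gt]
      constructor <;> intro h <;> linarith
    rw [hset]
    rfl
  have hint : Integrable (fun ω => max (X ω - s) 0) μ :=
    (hX.sub (integrable_const s)).sup (integrable_const 0)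
  rw [hint.integral_eq_integral_meas_lt
      (Eventually.of_forall fun ω => le_max_right _ _),
    setIntegral_congr_fun measurableSet_Ioi hlevel, cumSurvival]
  have hshift := (measurePreserving_add_left volume s).setIntegral_preimage_emb
    (measurableEmbedding_addLeft s) (survival μ X) (Ioi s)
  rwa [preimage_const_add_Ioi, sub_self] at hshift

lemma survival_comp_of_rightInvOn {Ω : Set ℝ} {g gInv : ℝ → ℝ} (hg : StrictMono g)
    (hgInv : ∀ s ∈ Ω, g (gInv s) = s) (hXΩ : ∀ᵐ ω ∂μ, X ω ∈ Ω) (z : ℝ) :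
    survival μ (fun ω => gInv (X ω)) z = survival μ X (g z) := by
  have hae : {ω | z < gInv (X ω)} =ᵐ[μ] {ω | g z < X ω} := by
    filter_upwards [hXΩ] with ω hω
    change (z < gInv (X ω)) = (g z < X ω)
    rw [eq_iff_iff, ← hg.lt_iff_lt, hgInv _ hω]
  simp only [survival, measure_congr hae]

lemma survival_eq_zero_of_notMem {Ω : Set ℝ} (hΩ : Ω.OrdConnected) (hXΩ : ∀ᵐ ω ∂μ, X ω ∈ Ω)
    {a x : ℝ} (ha : a ∈ Ω) (hax : a < x) (hx : x ∉ Ω) : survival μ X x = 0 := by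
  have hsub : {ω | x < X ω} ⊆ {ω | X ω ∉ Ω} := fun ω hω hXω =>
    hx (hΩ.out ha hXω ⟨hax.le, le_of_lt hω⟩)
  simp [survival, measure_mono_null hsub (ae_iff.mp hXΩ)]

end Survival

lemma hasDerivAt_setIntegral_Ioi {φ : ℝ → ℝ} {x : ℝ} (hφ : Integrable φ)
    (hφx : ContinuousAt φ x) : HasDerivAt (fun y => ∫ z in Ioi y, φ z) (-φ x) x := by
  have hsplit : (fun y => ∫ z in Ioi y, φ z)
      = fun y => (∫ z, φ z) - ((∫ z in Iic 0, φ z) + ∫ z in (0 : ℝ)..y, φ z) := by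
    ext y
    rw [intervalIntegral.integral_Iic_sub_Iic hφ.integrableOn hφ.integrableOn |>.symm,
      add_sub_cancel, ← integral_add_compl measurableSet_Iic hφ, compl_Iic, add_sub_cancel_left]
  rw [hsplit]
  simpa using ((intervalIntegral.integral_hasDerivAt_right hφ.intervalIntegrable
    hφ.aestronglyMeasurable.stronglyMeasurableAtFilter hφx).const_add _).const_sub _

section Density

variable {α : Type*} [MeasurableSpace α] {μ : Measure α} {X : α → ℝ} {fX : ℝ → ℝ}

lemma integrable_of_map_eq_withDensity [IsProbabilityMeasure μ] (hX : Measurable X)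
    (hf : Measurable fX) (hfX : ∀ x, 0 ≤ fX x)
    (hdens : μ.map X = volume.withDensity fun x => ENNReal.ofReal (fX x)) : Integrable fX := by
  have hone : ∫⁻ x, ENNReal.ofReal (fX x) = 1 := by
    rw [← setLIntegral_univ, ← withDensity_apply _ MeasurableSet.univ, ← hdens,
      Measure.map_apply hX MeasurableSet.univ, preimage_univ, measure_univ]
  refine ⟨hf.aestronglyMeasurable, ?_⟩
  rw [hasFiniteIntegral_iff_ofReal (Eventually.of_forall hfX), hone]
  exact ENNReal.one_lt_top

lemma survival_eq_setIntegral_of_map_eq_withDensity (hX : Measurable X) (hf : Measurable fX)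
    (hfX : ∀ x, 0 ≤ fX x)
    (hdens : μ.map X = volume.withDensity fun x => ENNReal.ofReal (fX x)) (x : ℝ) :
    survival μ X x = ∫ z in Ioi x, fX z := by
  change (μ (X ⁻¹' Ioi x)).toReal = _
  rw [← Measure.map_apply hX measurableSet_Ioi, hdens,
    withDensity_apply _ measurableSet_Ioi, integral_eq_lintegral_of_nonneg_ae
      (Eventually.of_forall hfX) hf.aestronglyMeasurable]

lemma hasDerivAt_survival_of_map_eq_withDensity [IsProbabilityMeasure μ] (hX : Measurable X)
    (hf : Continuous fX) (hfX : ∀ x, 0 ≤ fX x)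
    (hdens : μ.map X = volume.withDensity fun x => ENNReal.ofReal (fX x)) (x : ℝ) :
    HasDerivAt (survival μ X) (-fX x) x := by
  rw [funext (survival_eq_setIntegral_of_map_eq_withDensity hX hf.measurable hfX hdens)]
  exact hasDerivAt_setIntegral_Ioi (integrable_of_map_eq_withDensity hX hf.measurable hfX hdens)
    hf.continuousAt

end Density

section Estimator

variable {α : Type*} [MeasurableSpace α] {μ : Measure α} {X : α → ℝ} {g : ℝ → ℝ}

lemma abs_sub_le_integral_abs_deriv (hg : Differentiable ℝ g) (hg' : Integrable (deriv g))
    (x y : ℝ) : |g y - g x| ≤ ∫ z, |deriv g z| := by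
  rw [← intervalIntegral.integral_deriv_eq_sub (fun z _ => hg z) hg'.intervalIntegrable]
  exact intervalIntegral.norm_integral_le_integral_norm_uIoc.trans
    (setIntegral_le_integral hg'.norm (Eventually.of_forall fun _ => norm_nonneg _))

lemma setIntegral_Iic_deriv_mul_kerV {K : ℝ → ℝ} (hK : Integrable K) (hg : Differentiable ℝ g)
    (hg_mono : Monotone g) (hg' : Integrable (deriv g)) {h : ℝ} (hh : 0 < h) (τ y : ℝ) :
    ∫ z in Iic y, deriv g z * kerV K ((τ - z) / h) = ∫ u, K u * max (g y - g (τ - h * u)) 0 := by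
  set G : ℝ → ℝ → ℝ := fun z u => (Ioi (τ - h * u)).indicator (deriv g) z * K u
  have hG : Integrable (Function.uncurry G) ((volume.restrict (Iic y)).prod volume) := by
    have hS : MeasurableSet {p : ℝ × ℝ | τ - h * p.2 < p.1} :=
      measurableSet_lt (by fun_prop) measurable_fst
    refine ((hg'.restrict.mul_prod hK).indicator hS).congr (Eventually.of_forall fun p => ?_)
    simp only [G, Function.uncurry, indicator_apply, mem_ofPred_eq, mem_Ioi]
    split_ifs <;> ring
  have hz : ∀ z, deriv g z * kerV K ((τ - z) / h) = ∫ u, G z u := by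
    intro z
    rw [kerV, ← integral_indicator measurableSet_Ioi, ← integral_const_mul]
    congr 1 with u
    have hiff : (τ - z) / h < u ↔ τ - h * u < z := by
      rw [div_lt_iff₀ hh]; constructor <;> intro _ <;> linarith
    simp only [G, indicator_apply, mem_Ioi, hiff]
    split_ifs <;> ring
  have hu : ∀ u, ∫ z in Iic y, G z u = K u * max (g y - g (τ - h * u)) 0 := by
    intro u
    rw [integral_mul_const, setIntegral_indicator measurableSet_Ioi, inter_comm,
      Ioi_inter_Iic, mul_comm]
    rcases le_or_gt (τ - h * u) y with hle | hlt
    · rw [← intervalIntegral.integral_of_le hle,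
        intervalIntegral.integral_deriv_eq_sub (fun z _ => hg z) hg'.intervalIntegrable,
        max_eq_left (sub_nonneg.mpr (hg_mono hle))]
    · rw [Ioc_eq_empty hlt.not_gt, Measure.restrict_empty, integral_zero_measure,
        max_eq_right (sub_nonpos.mpr (hg_mono hlt.le))]
  simp_rw [hz, integral_integral_swap hG, hu]

lemma integral_integral_mul_max_sub_zero [IsFiniteMeasure μ] {K s : ℝ → ℝ} (hK : Integrable K)
    (hs : Measurable s) {M : ℝ} (hsM : ∀ u, |s u| ≤ M) (hX : Integrable X μ) :
    ∫ ω, (∫ u, K u * max (X ω - s u) 0) ∂μ = ∫ u, K u * cumSurvival μ X (s u) := by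
  have hF : Integrable (fun p : α × ℝ => K p.2 * max (X p.1 - s p.2) 0) (μ.prod volume) := by
    refine (((hX.abs.add (integrable_const M)).mul_prod hK.norm)).mono'
      (hK.1.comp_snd.mul ((hX.1.comp_fst.sub (hs.comp measurable_snd).aestronglyMeasurable).sup
        aestronglyMeasurable_const)) (Eventually.of_forall fun p => ?_)
    have hmax : |max (X p.1 - s p.2) 0| ≤ |X p.1| + M := by
      rw [abs_of_nonneg (le_max_right _ _)]
      exact max_le (by linarith [le_abs_self (X p.1), neg_abs_le (s p.2), hsM p.2])
        (by positivity [(abs_nonneg _).trans (hsM 0)])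
    simp only [Real.norm_eq_abs, abs_mul, Pi.add_apply]
    rw [mul_comm (|X p.1| + M)]
    exact mul_le_mul_of_nonneg_left hmax (abs_nonneg _)
  rw [integral_integral_swap hF]
  simp_rw [integral_const_mul, integral_max_sub_zero_eq_cumSurvival hX]

lemma setIntegral_Ioi_deriv_mul_survival_comp {Ω : Set ℝ} (hΩ : Ω.OrdConnected)
    (hg : StrictMono g) (hgd : Differentiable ℝ g) (hg_range : range g = Ω)
    (hXΩ : ∀ᵐ ω ∂μ, X ω ∈ Ω) (y : ℝ) :
    ∫ z in Ioi y, deriv g z * survival μ X (g z) = cumSurvival μ X (g y) := by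
  have himage : g '' Ioi y = Ioi (g y) ∩ Ω := by
    ext x
    constructor
    · rintro ⟨w, hw, rfl⟩
      exact ⟨hg hw, hg_range ▸ mem_range_self w⟩
    · rintro ⟨hx, hxΩ⟩
      obtain ⟨w, rfl⟩ := hg_range ▸ hxΩ
      exact ⟨w, hg.lt_iff_lt.mp hx, rfl⟩
  have hvanish : ∀ x ∈ Ioi (g y), survival μ X x = Ω.indicator (survival μ X) x := by
    intro x hx
    by_cases hxΩ : x ∈ Ω
    · rw [indicator_of_mem hxΩ]
    · rw [indicator_of_notMem hxΩ, survival_eq_zero_of_notMem hΩ hXΩ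
        (hg_range ▸ mem_range_self y) hx hxΩ]
  rw [cumSurvival, setIntegral_congr_fun measurableSet_Ioi hvanish,
    setIntegral_indicator hΩ.measurableSet, ← himage,
    integral_image_eq_integral_abs_deriv_smul measurableSet_Ioi
      (fun x _ => (hgd x).hasDerivAt.hasDerivWithinAt) hg.injective.injOn]
  refine setIntegral_congr_fun measurableSet_Ioi fun z _ => ?_
  rw [abs_of_nonneg hg.monotone.deriv_nonneg, smul_eq_mul]

lemma integral_setIntegral_Iic_deriv_mul_kerV [IsFiniteMeasure μ] {Ω : Set ℝ} {K gInv : ℝ → ℝ}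
    (hK : Integrable K) (hg : Differentiable ℝ g) (hg_mono : Monotone g)
    (hg' : Integrable (deriv g)) (hgInv : ∀ s ∈ Ω, g (gInv s) = s) (hXΩ : ∀ᵐ ω ∂μ, X ω ∈ Ω)
    (hX : Integrable X μ) {h : ℝ} (hh : 0 < h) (τ : ℝ) :
    ∫ ω, (∫ z in Iic (gInv (X ω)), deriv g z * kerV K ((τ - z) / h)) ∂μ
      = ∫ u, K u * cumSurvival μ X (g (τ - h * u)) := by
  have hbdd : ∀ u, |g (τ - h * u)| ≤ |g 0| + ∫ z, |deriv g z| := fun u => by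
    linarith [abs_sub_abs_le_abs_sub (g (τ - h * u)) (g 0),
      abs_sub_le_integral_abs_deriv hg hg' 0 (τ - h * u)]
  calc _ = ∫ ω, (∫ u, K u * max (X ω - g (τ - h * u)) 0) ∂μ := by
        refine integral_congr_ae ?_
        filter_upwards [hXΩ] with ω hω
        rw [setIntegral_Iic_deriv_mul_kerV hK hg hg_mono hg' hh, hgInv _ hω]
    _ = _ := integral_integral_mul_max_sub_zero hK
      (hg.continuous.comp (by fun_prop : Continuous fun u => τ - h * u)).measurable hbdd hX

lemma deriv_deriv_setIntegral_Ioi_deriv_mul_survival_comp [IsProbabilityMeasure μ]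
    {fX : ℝ → ℝ} (hg : ContDiff ℝ 2 g) (hg' : Integrable (deriv g))
    (hS : ∀ x, HasDerivAt (survival μ X) (-fX x) x) (τ : ℝ) :
    deriv (deriv fun y => ∫ z in Ioi y, deriv g z * survival μ X (g z)) τ
      = deriv g τ ^ 2 * fX (g τ) - deriv (deriv g) τ * survival μ X (g τ) := by
  set φ := fun z => deriv g z * survival μ X (g z)
  have hgd : Differentiable ℝ g := hg.differentiable (by norm_num)
  have hgd' : Differentiable ℝ (deriv g) := (hg.iterate_deriv' 1 1).differentiable one_ne_zero
  have hφ : Continuous φ := hgd'.continuous.mul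
    ((continuous_iff_continuousAt.2 fun x => (hS x).continuousAt).comp hgd.continuous)
  have hφi : Integrable φ := by
    refine hg'.norm.mono' hφ.aestronglyMeasurable (Eventually.of_forall fun z => ?_)
    simp only [φ, norm_mul, Real.norm_eq_abs, abs_of_nonneg (survival_nonneg _)]
    exact mul_le_of_le_one_right (abs_nonneg _) (survival_le_one _)
  have hderiv : deriv (fun y => ∫ z in Ioi y, φ z) = fun y => -φ y :=
    funext fun y => (hasDerivAt_setIntegral_Ioi hφi hφ.continuousAt).deriv
  have hφ' : HasDerivAt φ (deriv (deriv g) τ * survival μ X (g τ)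
      + deriv g τ * (-fX (g τ) * deriv g τ)) τ :=
    (hgd' τ).hasDerivAt.mul ((hS (g τ)).comp τ (hgd τ).hasDerivAt)
  rw [hderiv, hφ'.fun_neg.deriv]
  ring

end Estimator

theorem bias_cumSurvival_estimator_two_general
    {α : Type*} [MeasurableSpace α] (μ : Measure α) [IsProbabilityMeasure μ]
    -- C1: the kernel
    (K : ℝ → ℝ)
    (hK_symm : ∀ x, K (-x) = K x) (hK_one : (∫ x, K x) = 1)
    (hK_mom2 : Integrable (fun x => x ^ 2 * K x))
    -- C3, C4: the transformation
    (Ω : Set ℝ) (hΩ : Set.OrdConnected Ω)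
    (g gInv fX : ℝ → ℝ)
    (hg_smooth : ContDiff ℝ 2 g) (hg_mono : StrictMono g)
    (hg_range : Set.range g = Ω)
    (hgInv_right : ∀ s ∈ Ω, g (gInv s) = s)
    -- the random variable and its density
    (X : α → ℝ) (hX : Measurable X) (hXΩ : ∀ᵐ ω ∂μ, X ω ∈ Ω)
    (hfX_smooth : ContDiff ℝ 2 fX) (hfX_nonneg : ∀ x, 0 ≤ fX x)
    (hdens : μ.map X = volume.withDensity (fun x => ENNReal.ofReal (fX x)))
    -- C5
    (hgV : ∃ ε > (0 : ℝ), ∀ u : ℝ, |u| < ε →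
      Integrable (fun x => deriv g (u * x) * kerV K x))
    -- C6: moments
    (hM1 : Integrable X μ)
    -- the point of evaluation
    (t : ℝ) (ht : t ∈ Ω)
    -- the function a(y) = ∫_y^∞ g′(z) S_Y(z) dz is twice continuously
    -- differentiable with bounded second derivative
    (ha_smooth : ContDiff ℝ 2 (fun y =>
      ∫ z in Set.Ioi y, deriv g z * survival μ (fun ω => gInv (X ω)) z))
    (ha_bdd : ∃ C : ℝ, ∀ y,
      |deriv (deriv (fun w =>
        ∫ z in Set.Ioi w, deriv g z * survival μ (fun ω => gInv (X ω)) z)) y|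
          ≤ C) :
    (fun h : ℝ =>
        (∫ ω, (∫ z in Set.Iic (gInv (X ω)),
            deriv g z * kerV K ((gInv t - z) / h)) ∂μ)
          - cumSurvival μ X t
          - h ^ 2 / 2 *
              ((deriv g (gInv t)) ^ 2 * fX t -
                deriv (deriv g) (gInv t) * survival μ X t) *
              ∫ y, y ^ 2 * K y)
      =o[nhdsWithin (0 : ℝ) (Set.Ioi 0)] (fun h => h ^ 2) := by
  have hK : Integrable K := integrable_of_integral_eq_one hK_one
  have hgd : Differentiable ℝ g := hg_smooth.differentiable (by norm_num)
  have hg' : Integrable (deriv g) := by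
    obtain ⟨ε, hε, hgV⟩ := hgV
    exact integrable_of_integrable_comp_mul_mul_kerV hK_symm hK_one (u := ε / 2)
      (by positivity) (hgV _ (by rw [abs_of_pos (by positivity)]; linarith))
      (hgV _ (by rw [abs_neg, abs_of_pos (by positivity)]; linarith))
  have hS := hasDerivAt_survival_of_map_eq_withDensity hX hfX_smooth.continuous hfX_nonneg hdens
  simp_rw [survival_comp_of_rightInvOn hg_mono hgInv_right hXΩ] at ha_smooth ha_bdd
  obtain ⟨C, hC⟩ := ha_bdd
  have hbias := isLittleO_integral_mul_comp_sub_taylor hK hK_symm hK_mom2 ha_smooth hC (gInv t)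
  rw [deriv_deriv_setIntegral_Ioi_deriv_mul_survival_comp hg_smooth hg' hS, hgInv_right t ht,
    hK_one, one_mul] at hbias
  simp_rw [setIntegral_Ioi_deriv_mul_survival_comp hΩ hg_mono hgd hg_range hXΩ,
    hgInv_right t ht] at hbias
  refine (hbias.mono nhdsWithin_le_nhds).congr' ?_ EventuallyEq.rfl
  filter_upwards [self_mem_nhdsWithin] with h hh
  rw [integral_setIntegral_Iic_deriv_mul_kerV hK hgd hg_mono.monotone hg' hgInv_right hXΩ hM1 hh]

/-- Bias expansion of the second proposed cumulative survival function
estimator `𝕊̃_{X,2}(t)`:  as `h → 0⁺`,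
`E[𝕊̃_{X,2}(t)] − 𝕊_X(t) = (h²/2) b₃(t) ∫ y² K(y) dy + o(h²)`, where
`b₃(t) = (g′(g⁻¹t))² f_X(t) − g″(g⁻¹t) S_X(t)`. -/
theorem bias_cumSurvival_estimator_two
    {α : Type*} [MeasurableSpace α] (μ : Measure α) [IsProbabilityMeasure μ]
    -- C1: the kernel
    (K : ℝ → ℝ) (hK_cont : Continuous K) (hK_nonneg : ∀ x, 0 ≤ K x)
    (hK_symm : ∀ x, K (-x) = K x) (hK_one : (∫ x, K x) = 1)
    (hK_mom2 : Integrable (fun x => x ^ 2 * K x))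
    -- C3, C4: the transformation
    (Ω : Set ℝ) (hΩ : Set.OrdConnected Ω)
    (g gInv fX : ℝ → ℝ)
    (hg_smooth : ContDiff ℝ 2 g) (hg_mono : StrictMono g)
    (hg_range : Set.range g = Ω)
    (hgInv_left : Function.LeftInverse gInv g)
    (hgInv_right : ∀ s ∈ Ω, g (gInv s) = s)
    (hgInv_meas : Measurable gInv)
    -- the random variable and its density
    (X : α → ℝ) (hX : Measurable X) (hXΩ : ∀ᵐ ω ∂μ, X ω ∈ Ω)
    (hfX_smooth : ContDiff ℝ 2 fX) (hfX_nonneg : ∀ x, 0 ≤ fX x)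
    (hdens : μ.map X = volume.withDensity (fun x => ENNReal.ofReal (fX x)))
    -- C4: the density f_Y(y) = g′(y) f_X(g(y)) of Y = g⁻¹(X) is twice
    -- continuously differentiable with bounded second derivative
    (hfY_smooth : ContDiff ℝ 2 (fun y => deriv g y * fX (g y)))
    (hfY_bdd : ∃ C : ℝ, ∀ y,
      |deriv (deriv (fun z => deriv g z * fX (g z))) y| ≤ C)
    -- C5
    (hgK : ∃ ε > (0 : ℝ), ∀ u : ℝ, |u| < ε →
      Integrable (fun x => deriv g (u * x) * K x))
    (hgV : ∃ ε > (0 : ℝ), ∀ u : ℝ, |u| < ε →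
      Integrable (fun x => deriv g (u * x) * kerV K x))
    -- C6: moments
    (hM1 : Integrable X μ) (hM2 : Integrable (fun ω => (X ω) ^ 2) μ)
    (hM3 : Integrable (fun ω => (X ω) ^ 3) μ)
    -- the point of evaluation
    (t : ℝ) (ht : t ∈ Ω)
    -- the function a(y) = ∫_y^∞ g′(z) S_Y(z) dz is twice continuously
    -- differentiable with bounded second derivative
    (ha_smooth : ContDiff ℝ 2 (fun y =>
      ∫ z in Set.Ioi y, deriv g z * survival μ (fun ω => gInv (X ω)) z))
    (ha_bdd : ∃ C : ℝ, ∀ y,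
      |deriv (deriv (fun w =>
        ∫ z in Set.Ioi w, deriv g z * survival μ (fun ω => gInv (X ω)) z)) y|
          ≤ C) :
    (fun h : ℝ =>
        (∫ ω, (∫ z in Set.Iic (gInv (X ω)),
            deriv g z * kerV K ((gInv t - z) / h)) ∂μ)
          - cumSurvival μ X t
          - h ^ 2 / 2 *
              ((deriv g (gInv t)) ^ 2 * fX t -
                deriv (deriv g) (gInv t) * survival μ X t) *
              ∫ y, y ^ 2 * K y)
      =o[nhdsWithin (0 : ℝ) (Set.Ioi 0)] (fun h => h ^ 2) :=
  bias_cumSurvival_estimator_two_general μ K hK_symm hK_one hK_mom2 Ω hΩ g gInv fX hg_smooth hg_mono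
    hg_range hgInv_right X hX hXΩ hfX_smooth hfX_nonneg hdens hgV hM1 t ht ha_smooth ha_bdd
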